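/- Let P be a finite rooted poset that is a frame for wPL, i.e. a Boolean sum. Then P validates both Yankov formulas 𝒥(Q_4) and 𝒥(Q_5) if and only if P contains no 2-stack (its stack-depth is at most 1). -/

import Mathlib

/-! # Common framework: superintuitionistic logics, Kripke frames and models -/

/-! ## Intuitionistic propositional formulas -/

inductive Form : Type
  | var : ℕ → Form
  | bot : Form
  | top : Form
  | and : Form → Form → Form
  | or  : Form → Form → Form
  | imp : Form → Form → Form
deriving DecidableEq

namespace Form

/-- Implication depth of a formula. -/
def depth : Form → ℕ
  | var _ => 0
  | bot => 0
  | top => 0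
  | and φ ψ => max φ.depth ψ.depth
  | or φ ψ => max φ.depth ψ.depth
  | imp φ ψ => max φ.depth ψ.depth + 1

/-- All propositional variables of the formula are among `p_0, …, p_{m-1}`. -/
def varsLt (m : ℕ) : Form → Prop
  | var p => p < m
  | bot => True
  | top => True
  | and φ ψ => φ.varsLt m ∧ ψ.varsLt m
  | or φ ψ => φ.varsLt m ∧ ψ.varsLt m
  | imp φ ψ => φ.varsLt m ∧ ψ.varsLt m

/-- Uniform substitution. -/
def subst (σ : ℕ → Form) : Form → Form
  | var p => σ p
  | bot => bot
  | top => top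
  | and φ ψ => and (φ.subst σ) (ψ.subst σ)
  | or φ ψ => or (φ.subst σ) (ψ.subst σ)
  | imp φ ψ => imp (φ.subst σ) (ψ.subst σ)

/-- Biconditional. -/
def iff (φ ψ : Form) : Form := and (imp φ ψ) (imp ψ φ)

/-- Negation. -/
def neg (φ : Form) : Form := imp φ bot

end Form

/-! ## IPC and superintuitionistic logics -/

/-- A Hilbert-style axiomatization of intuitionistic propositional logic. -/
inductive IPC : Form → Prop
  | ax1 (φ ψ : Form) : IPC (.imp φ (.imp ψ φ))
  | ax2 (φ ψ χ : Form) :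
      IPC (.imp (.imp φ (.imp ψ χ)) (.imp (.imp φ ψ) (.imp φ χ)))
  | andE1 (φ ψ : Form) : IPC (.imp (.and φ ψ) φ)
  | andE2 (φ ψ : Form) : IPC (.imp (.and φ ψ) ψ)
  | andI (φ ψ : Form) : IPC (.imp φ (.imp ψ (.and φ ψ)))
  | orI1 (φ ψ : Form) : IPC (.imp φ (.or φ ψ))
  | orI2 (φ ψ : Form) : IPC (.imp ψ (.or φ ψ))
  | orE (φ ψ χ : Form) :
      IPC (.imp (.imp φ χ) (.imp (.imp ψ χ) (.imp (.or φ ψ) χ)))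
  | botE (φ : Form) : IPC (.imp .bot φ)
  | topI : IPC .top
  | mp (φ ψ : Form) : IPC (.imp φ ψ) → IPC φ → IPC ψ

/-- The set of theorems of IPC. -/
def IPCSet : Set Form := {φ | IPC φ}

/-- A superintuitionistic logic: a set of formulas containing all theorems of
IPC, closed under modus ponens and uniform substitution. -/
def IsSILogic (L : Set Form) : Prop :=
  IPCSet ⊆ L ∧
  (∀ φ ψ : Form, Form.imp φ ψ ∈ L → φ ∈ L → ψ ∈ L) ∧
  (∀ (φ : Form) (σ : ℕ → Form), φ ∈ L → φ.subst σ ∈ L)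

/-- `oplus L Γ` is the least superintuitionistic logic containing `L` and `Γ`
(written `L ⊕ Γ`). -/
def oplus (L Γ : Set Form) : Set Form :=
  ⋂₀ {M : Set Form | IsSILogic M ∧ L ⊆ M ∧ Γ ⊆ M}

/-- A logic is `n`-uniform if every formula is provably equivalent in it to a
formula of implication depth at most `n`. -/
def Uniform (L : Set Form) (n : ℕ) : Prop :=
  ∀ φ : Form, ∃ ψ : Form, ψ.depth ≤ n ∧ Form.iff φ ψ ∈ L

/-- A logic is locally tabular if over each finite tuple of variables there are
only finitely many formulas up to provable equivalence. -/
def LocallyTabular (L : Set Form) : Prop :=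
  ∀ m : ℕ, ∃ Φ : Finset Form, ∀ φ : Form, φ.varsLt m → ∃ ψ ∈ Φ, Form.iff φ ψ ∈ L

/-! ## Kripke frames (posets) -/

structure Frame : Type 1 where
  W : Type
  le : W → W → Prop
  refl : ∀ x, le x x
  trans : ∀ x y z, le x y → le y z → le x z
  antisymm : ∀ x y, le x y → le y x → x = y

namespace Frame

def lt (F : Frame) (a b : F.W) : Prop := F.le a b ∧ a ≠ b

/-- A valuation is persistent if it is preserved upwards. -/
def Persistent (F : Frame) (V : ℕ → F.W → Prop) : Prop :=
  ∀ p a b, F.le a b → V p a → V p b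

/-- Kripke forcing. -/
def force (F : Frame) (V : ℕ → F.W → Prop) : Form → F.W → Prop
  | .var p, w => V p w
  | .bot, _ => False
  | .top, _ => True
  | .and φ ψ, w => F.force V φ w ∧ F.force V ψ w
  | .or φ ψ, w => F.force V φ w ∨ F.force V ψ w
  | .imp φ ψ, w => ∀ v, F.le w v → F.force V φ v → F.force V ψ v

/-- `F ⊩ φ`. -/
def Valid (F : Frame) (φ : Form) : Prop :=
  ∀ V : ℕ → F.W → Prop, F.Persistent V → ∀ w : F.W, F.force V φ w

def Rooted (F : Frame) : Prop := ∃ r, ∀ w, F.le r w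

/-- The subposet on a subset of the carrier. -/
def restrict (F : Frame) (s : Set F.W) : Frame where
  W := s
  le a b := F.le a.1 b.1
  refl a := F.refl a.1
  trans a b c h1 h2 := F.trans a.1 b.1 c.1 h1 h2
  antisymm a b h1 h2 := Subtype.ext (F.antisymm a.1 b.1 h1 h2)

/-- The rooted upset `↑z`. -/
def up (F : Frame) (z : F.W) : Frame := F.restrict {w | F.le z w}

/-- There is a chain of `d` elements in `↑w` starting at `w`. -/
def hasChainUp (F : Frame) (w : F.W) (d : ℕ) : Prop :=
  ∃ f : Fin d → F.W, (∀ i : Fin d, (i : ℕ) = 0 → f i = w) ∧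
    (∀ i j : Fin d, (i : ℕ) < (j : ℕ) → F.lt (f i) (f j))

/-- The depth of `w` is `d`: the longest chain in `↑w` has exactly `d` elements. -/
def depthEq (F : Frame) (w : F.W) (d : ℕ) : Prop :=
  F.hasChainUp w d ∧ ¬ F.hasChainUp w (d + 1)

/-- The covering relation of the poset. -/
def covBy (F : Frame) (a b : F.W) : Prop :=
  F.lt a b ∧ ∀ c, F.lt a c → F.lt c b → False

end Frame

/-- A p-morphism of posets. -/
def IsPMorphism (P Q : Frame) (f : P.W → Q.W) : Prop :=
  (∀ a b, P.le a b → Q.le (f a) (f b)) ∧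
  (∀ a b, Q.le (f a) b → ∃ a', P.le a a' ∧ f a' = b)

/-- `Q` is a p-morphic image of `P`. -/
def PMorphicImage (P Q : Frame) : Prop :=
  ∃ f : P.W → Q.W, IsPMorphism P Q f ∧ Function.Surjective f

/-- Order isomorphism of posets. -/
def FrameIso (P Q : Frame) : Prop :=
  ∃ f : P.W → Q.W, Function.Bijective f ∧ ∀ a b, P.le a b ↔ Q.le (f a) (f b)

/-- The logic of a class of posets. -/
def LogK (K : Set Frame) : Set Form := {φ | ∀ F ∈ K, F.Valid φ}

/-- The logic of a single poset. -/
def FrameLog (F : Frame) : Set Form := {φ | F.Valid φ}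

/-- `J` is a Yankov formula for the finite rooted poset `Q`: a finite poset
refutes `J` exactly when `Q` is isomorphic to a rooted upset of one of its
p-morphic images. -/
def IsYankov (J : Form) (Q : Frame) : Prop :=
  ∀ P : Frame, Finite P.W →
    (¬ P.Valid J ↔ ∃ G : Frame, PMorphicImage P G ∧ ∃ z : G.W, FrameIso (G.up z) Q)

/-! ## Rooted Kripke models over `n` propositional variables -/

structure Model (n : ℕ) : Type 1 where
  W : Type
  le : W → W → Prop
  refl : ∀ x, le x x
  trans : ∀ x y z, le x y → le y z → le x z
  antisymm : ∀ x y, le x y → le y x → x = y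
  root : W
  rooted : ∀ w, le root w
  col : W → Set (Fin n)
  mono : ∀ a b, le a b → col a ⊆ col b

namespace Model

/-- The underlying poset of a model. -/
def frame {n : ℕ} (M : Model n) : Frame :=
  ⟨M.W, M.le, M.refl, M.trans, M.antisymm⟩

def force {n : ℕ} (M : Model n) : Form → M.W → Prop
  | .var p, w => ∃ h : p < n, (⟨p, h⟩ : Fin n) ∈ M.col w
  | .bot, _ => False
  | .top, _ => True
  | .and φ ψ, w => M.force φ w ∧ M.force ψ w
  | .or φ ψ, w => M.force φ w ∨ M.force ψ w
  | .imp φ ψ, w => ∀ v, M.le w v → M.force φ v → M.force ψ v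

/-- Satisfaction at the root of the model. -/
def Sat {n : ℕ} (M : Model n) (φ : Form) : Prop := M.force φ M.root

/-- (Full) bisimilarity of two rooted models. -/
def Bisim {n : ℕ} (M N : Model n) : Prop :=
  ∃ S : M.W → N.W → Prop,
    S M.root N.root ∧
    (∀ a b, S a b → M.col a = N.col b) ∧
    (∀ a b a', S a b → M.le a a' → ∃ b', N.le b b' ∧ S a' b') ∧
    (∀ a b b', S a b → N.le b b' → ∃ a', M.le a a' ∧ S a' b')

/-- `k`-bisimilarity of the points `x, y`, via a decreasing chain
`S k ⊆ ⋯ ⊆ S 0` of relations. -/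
def NBisimAt {n : ℕ} (M N : Model n) (k : ℕ) (x : M.W) (y : N.W) : Prop :=
  ∃ S : ℕ → M.W → N.W → Prop,
    (∀ j a b, S (j + 1) a b → S j a b) ∧
    S k x y ∧
    (∀ a b, S 0 a b → M.col a = N.col b) ∧
    (∀ j a b a', j < k → S (j + 1) a b → M.le a a' →
        ∃ b', N.le b b' ∧ S j a' b') ∧
    (∀ j a b b', j < k → S (j + 1) a b → N.le b b' →
        ∃ a', M.le a a' ∧ S j a' b')

/-- `k`-bisimilarity of two rooted models. -/
def NBisim {n : ℕ} (M N : Model n) (k : ℕ) : Prop :=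
  NBisimAt M N k M.root N.root

/-- The submodel on the rooted upset `↑z`. -/
def up {n : ℕ} (M : Model n) (z : M.W) : Model n where
  W := {w : M.W // M.le z w}
  le a b := M.le a.1 b.1
  refl a := M.refl a.1
  trans a b c h1 h2 := M.trans a.1 b.1 c.1 h1 h2
  antisymm a b h1 h2 := Subtype.ext (M.antisymm a.1 b.1 h1 h2)
  root := ⟨z, M.refl z⟩
  rooted w := w.2
  col a := M.col a.1
  mono a b h := M.mono a.1 b.1 h

/-- `(M, x) ≤ₖ (N, y)`: there is `z ≥ x` such that `(↑z, z)` is `k`-bisimilar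
with `(N, y)`. -/
def LeBisim {n : ℕ} (M N : Model n) (k : ℕ) : Prop :=
  ∃ z : M.W, M.le M.root z ∧ NBisim (M.up z) N k

/-- Two points of a model are bisimilar. -/
def PointsBisim {n : ℕ} (M : Model n) (a b : M.W) : Prop :=
  ∃ S : M.W → M.W → Prop,
    S a b ∧
    (∀ x y, S x y → M.col x = M.col y) ∧
    (∀ x y x', S x y → M.le x x' → ∃ y', M.le y y' ∧ S x' y') ∧
    (∀ x y y', S x y → M.le y y' → ∃ x', M.le x x' ∧ S x' y')

/-- A model over `n` variables is (`n`-)generated if it contains no two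
distinct bisimilar points. -/
def Generated {n : ℕ} (M : Model n) : Prop :=
  ∀ a b : M.W, M.PointsBisim a b → a = b

/-- Isomorphism of models: a root-preserving, color-preserving order
isomorphism. -/
def Iso {n : ℕ} (M N : Model n) : Prop :=
  ∃ f : M.W → N.W, Function.Bijective f ∧ f M.root = N.root ∧
    (∀ a b, M.le a b ↔ N.le (f a) (f b)) ∧ (∀ a, N.col (f a) = M.col a)

/-- `M` is a model over the class of posets `K`: its underlying poset is a
p-morphic image of a rooted upset of a member of `K`. -/
def InClass {n : ℕ} (K : Set Frame) (M : Model n) : Prop :=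
  ∃ F ∈ K, ∃ z : F.W, PMorphicImage (F.up z) M.frame

/-- The model on the rooted upset `↑z` of a frame `F`, with coloring `c`. -/
def ofFrame (F : Frame) (z : F.W) (n : ℕ) (c : (F.up z).W → Set (Fin n))
    (hc : ∀ a b : (F.up z).W, (F.up z).le a b → c a ⊆ c b) : Model n where
  W := (F.up z).W
  le := (F.up z).le
  refl := (F.up z).refl
  trans := (F.up z).trans
  antisymm := (F.up z).antisymm
  root := ⟨z, F.refl z⟩
  rooted w := w.2
  col := c
  mono := hc

end Model

/-! ## Boolean sums and stacks -/

/-- A (finite rooted) poset is a Boolean sum: it is rooted, covers decrease the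
depth by exactly one, and every point of depth `k+1` lies below every point of
depth `k`. -/
def IsBooleanSum (F : Frame) : Prop :=
  F.Rooted ∧
  (∀ a b da db, F.covBy a b → F.depthEq a da → F.depthEq b db → da = db + 1) ∧
  (∀ a b k, F.depthEq a (k + 1) → F.depthEq b k → F.le a b)

/-- `F` contains a `k`-stack: `k` consecutive layers (sets of points of equal
depth) each containing at least two points. -/
def HasStack (F : Frame) (k : ℕ) : Prop :=
  ∃ j : ℕ, ∀ i : ℕ, j ≤ i → i < j + k →
    ∃ a b : F.W, a ≠ b ∧ F.depthEq a i ∧ F.depthEq b i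

/-! ## The posets Q₁, …, Q₈ -/

def q1le : Fin 4 → Fin 4 → Bool := fun a b =>
  a = b || a = 0 || (a = 1 && b = 3)
def q2le : Fin 5 → Fin 5 → Bool := fun a b =>
  a = b || a = 0 || (a = 1 && (b = 3 || b = 4)) || (a = 2 && b = 4)
def q3le : Fin 5 → Fin 5 → Bool := fun a b =>
  a = b || a = 0 || (a = 1 && b = 4) || (a = 2 && (b = 3 || b = 4)) ||
    (a = 3 && b = 4)
def q4le : Fin 5 → Fin 5 → Bool := fun a b =>
  a = b || a = 0 || ((a = 1 || a = 2) && (b = 3 || b = 4))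
def q5le : Fin 6 → Fin 6 → Bool := fun a b =>
  a = b || a = 0 || b = 5 || ((a = 1 || a = 2) && (b = 3 || b = 4))
def q6le : Fin 4 → Fin 4 → Bool := fun a b =>
  a = b || a = 0 || b = 3
def q7le : Fin 5 → Fin 5 → Bool := fun a b =>
  a = b || a = 0 || (a = 1 && b = 3) || (a = 2 && b = 4)
def q8le : Fin 4 → Fin 4 → Bool := fun a b =>
  a = b || a = 0

/-- `Q₁`: root `0`; immediate successors `1`, `2`; `2` maximal; `3` the unique
(maximal) immediate successor of `1`. -/
def Q1f : Frame :=
  ⟨Fin 4, fun a b => q1le a b = true, by decide, by decide, by decide⟩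
/-- `Q₂`: root `0`; immediate successors `1`, `2`; maximal points `3`, `4`;
`1 < 3`, `1 < 4`, `2 < 4`, `2 ≮ 3`. -/
def Q2f : Frame :=
  ⟨Fin 5, fun a b => q2le a b = true, by decide, by decide, by decide⟩
/-- `Q₃`: root `0`; immediate successors `1`, `2`; `3` covers `2`; top `4`
with `1 < 4` and `3 < 4`. -/
def Q3f : Frame :=
  ⟨Fin 5, fun a b => q3le a b = true, by decide, by decide, by decide⟩
/-- `Q₄`: root `0`; `1`, `2` cover the root; maximal `3`, `4` above both `1`
and `2`. -/
def Q4f : Frame :=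
  ⟨Fin 5, fun a b => q4le a b = true, by decide, by decide, by decide⟩
/-- `Q₅`: `Q₄` with a greatest element `5` added on top. -/
def Q5f : Frame :=
  ⟨Fin 6, fun a b => q5le a b = true, by decide, by decide, by decide⟩
/-- `Q₆`: the diamond. -/
def Q6f : Frame :=
  ⟨Fin 4, fun a b => q6le a b = true, by decide, by decide, by decide⟩
/-- `Q₇`: root `0`; `1 < 3`, `2 < 4`, and no other strict relations above the
root. -/
def Q7f : Frame :=
  ⟨Fin 5, fun a b => q7le a b = true, by decide, by decide, by decide⟩
/-- `Q₈`: a root with three pairwise incomparable maximal points. -/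
def Q8f : Frame :=
  ⟨Fin 4, fun a b => q8le a b = true, by decide, by decide, by decide⟩

/-! ## Particular logics -/

/-- The one-element poset. -/
def unitFrame : Frame :=
  ⟨PUnit, fun _ _ => True, fun _ => trivial, fun _ _ _ _ _ => trivial,
    fun a b _ _ => Subsingleton.elim a b⟩

/-- The two-element chain. -/
def chain2 : Frame :=
  ⟨Bool, fun a b => a ≤ b, le_refl, fun _ _ _ => le_trans,
    fun _ _ => le_antisymm⟩

/-- Classical propositional logic: the logic of the one-element poset. -/
def CPC : Set Form := FrameLog unitFrame

/-- The logic of the two-element chain. -/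
def Sme : Set Form := FrameLog chain2

/-- The weak Peirce law `(q → p) ∨ (((p → q) → p) → p)`. -/
def wPLax : Form :=
  .or (.imp (.var 1) (.var 0))
    (.imp (.imp (.imp (.var 0) (.var 1)) (.var 0)) (.var 0))

/-- The logic `wPL = IPC ⊕ (q → p) ∨ (((p → q) → p) → p)`. -/
def wPL : Set Form := oplus IPCSet {wPLax}

/-- The bounded-width-2 axiom `⋁_{i≤2} (pᵢ → ⋁_{j≠i} pⱼ)`. -/
def bw2ax : Form :=
  .or (.imp (.var 0) (.or (.var 1) (.var 2)))
    (.or (.imp (.var 1) (.or (.var 0) (.var 2)))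
      (.imp (.var 2) (.or (.var 0) (.var 1))))

/-- The axiom `¬p ∨ ¬¬p`. -/
def kcax : Form := .or (Form.neg (.var 0)) (Form.neg (Form.neg (.var 0)))

/-- The logic `Box = wPL ⊕ bw₂ ⊕ (¬p ∨ ¬¬p)`. -/
def BoxLogic : Set Form := oplus wPL {bw2ax, kcax}

/-- The bounded-depth formulas. -/
def bd : ℕ → Form
  | 0 => .var 0
  | n + 1 => .or (.var (n + 1)) (.imp (.var (n + 1)) (bd n))

/-- The logic `BD_n = IPC ⊕ bd_n`. -/
def BD (n : ℕ) : Set Form := oplus IPCSet {bd n}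

/-- A logic is of finite depth if it contains some `BD_n`. -/
def FiniteDepth (L : Set Form) : Prop := ∃ n, BD n ⊆ L

/-! ## The Rieger–Nishimura ladder -/

/-- Points of the Rieger–Nishimura ladder: `inl k = L_k`, `inr k = R_k`. -/
abbrev RNpt : Type := ℕ ⊕ ℕ

/-- The covering relation of the Rieger–Nishimura ladder (`rnCov a b` means
`a ⋖ b`, i.e. `b` is an immediate successor of `a`). -/
inductive rnCov : RNpt → RNpt → Prop
  | ll (k : ℕ) : rnCov (.inl (k + 1)) (.inl k)
  | rr (k : ℕ) : rnCov (.inr (k + 1)) (.inr k)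
  | rl (k : ℕ) : rnCov (.inr (k + 1)) (.inl k)
  | lr (k : ℕ) : rnCov (.inl (k + 2)) (.inr k)

private def rnIdx : RNpt → ℕ
  | .inl k => 2 * k
  | .inr k => 2 * k + 1

private theorem rnCov_idx {a b : RNpt} (h : rnCov a b) : rnIdx b < rnIdx a := by
  cases h <;> simp [rnIdx] <;> omega

private theorem rnLe_idx {a b : RNpt} (h : Relation.ReflTransGen rnCov a b) :
    rnIdx b ≤ rnIdx a := by
  induction h with
  | refl => exact le_rfl
  | tail _ h₂ ih => exact le_trans (le_of_lt (rnCov_idx h₂)) ih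

private theorem rnIdx_inj {a b : RNpt} (h : rnIdx a = rnIdx b) : a = b := by
  rcases a with a | a <;> rcases b with b | b <;> simp [rnIdx] at h ⊢ <;> omega

/-- The Rieger–Nishimura ladder as a poset: the order is the reflexive
transitive closure of the covering relation. -/
def RN : Frame where
  W := RNpt
  le a b := Relation.ReflTransGen rnCov a b
  refl _ := Relation.ReflTransGen.refl
  trans _ _ _ h1 h2 := h1.trans h2
  antisymm _ _ h1 h2 := rnIdx_inj (le_antisymm (rnLe_idx h2) (rnLe_idx h1))

/-! ## Combs -/

def combLe (n : ℕ) : (Fin n ⊕ Fin n) → (Fin n ⊕ Fin n) → Prop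
  | .inl i, .inl j => i ≤ j
  | .inl i, .inr j => i ≤ j
  | .inr i, .inr j => i = j
  | .inr _, .inl _ => False

/-- The `n`-comb: base points `x_1 ≤ … ≤ x_n` (encoded `inl 0, …, inl (n-1)`)
and maximal teeth `y_1, …, y_n` (encoded `inr 0, …, inr (n-1)`), with
`x_i ≤ y_j ↔ i ≤ j` and the teeth pairwise incomparable. -/
def Comb (n : ℕ) : Frame where
  W := Fin n ⊕ Fin n
  le := combLe n
  refl := by rintro (i | i) <;> simp [combLe]
  trans := by
    rintro (i | i) (j | j) (k | k) h1 h2 <;> simp only [combLe] at * <;>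
      first
        | exact le_trans h1 h2
        | exact h2 ▸ h1
  antisymm := by
    rintro (i | i) (j | j) h1 h2 <;> simp only [combLe] at * <;>
      first
        | exact congrArg Sum.inl (le_antisymm h1 h2)
        | exact congrArg Sum.inr h1

/-- A broken `m`-comb: (isomorphic to) a subposet of the `m`-comb containing
all of the base points `x_1, …, x_m`. -/
def IsBrokenComb (F : Frame) (m : ℕ) : Prop :=
  ∃ s : Set (Comb m).W, (∀ i : Fin m, Sum.inl i ∈ s) ∧
    FrameIso F ((Comb m).restrict s)

/-- The logic of the class of all combs. -/
def LFC : Set Form := LogK {F | ∃ n, F = Comb n}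

/-! ## The stacked models `M_n^k` and `N_n^k` -/

/-- Height index of a point: layer `j` (from the top) has index `j`, the root
(`none`) has index `k+1`. -/
def stackIdx (k : ℕ) : Option (Fin (k + 1) × Bool) → ℕ
  | none => k + 1
  | some (j, _) => j

/-- Size of the color (an initial segment of the variables): the left point
(`false`) of layer `j` gets `1^{n-j}0^j`, the right point (`true`) gets
`1^{n-j-1}0^{j+1}`, and the root gets `1^r0^{n-r}`. -/
def stackColSize (n k r : ℕ) : Option (Fin (k + 1) × Bool) → ℕ
  | none => r
  | some (j, false) => n - j
  | some (j, true) => n - ((j : ℕ) + 1)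

private theorem stackColSize_le (n k r : ℕ) (hr : r ≤ n - (k + 1))
    {a b : Option (Fin (k + 1) × Bool)} (h : stackIdx k b < stackIdx k a) :
    stackColSize n k r a ≤ stackColSize n k r b := by
  rcases a with _ | ⟨j, _ | _⟩ <;> rcases b with _ | ⟨j', _ | _⟩ <;>
    simp only [stackIdx, stackColSize] at * <;> omega

/-- The common shape of `M_n^k` and `N_n^k`, with root color `1^r0^{n-r}`:
`k+1` layers of two points stacked on top of a root. -/
def stackModel (n k r : ℕ) (hr : r ≤ n - (k + 1)) : Model n where
  W := Option (Fin (k + 1) × Bool)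
  le a b := a = b ∨ stackIdx k b < stackIdx k a
  refl _ := Or.inl rfl
  trans := by
    rintro a b c (rfl | h1) h2
    · exact h2
    · rcases h2 with rfl | h2
      · exact Or.inr h1
      · exact Or.inr (h2.trans h1)
  antisymm := by
    rintro a b (rfl | h1) h2
    · rfl
    · rcases h2 with rfl | h2
      · rfl
      · omega
  root := none
  rooted := by
    rintro (_ | ⟨j, s⟩)
    · exact Or.inl rfl
    · exact Or.inr j.isLt
  col a := {i : Fin n | (i : ℕ) < stackColSize n k r a}
  mono := by
    rintro a b (rfl | h) i hi
    · exact hi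
    · exact lt_of_lt_of_le hi (stackColSize_le n k r hr h)

/-- The model `M_n^k` (root color `1^{n-k-1}0^{k+1}`). -/
def Mmodel (n k : ℕ) : Model n := stackModel n k (n - (k + 1)) le_rfl

/-- The model `N_n^k` (root color `1^{n-k-2}0^{k+2}`). -/
def Nmodel (n k : ℕ) : Model n := stackModel n k (n - (k + 2)) (by omega)

/-! ## The frames `S_n` -/

/-- Height index in `S_n`: the top point (`some none`) has index `0`, the two
points of the `j`-th middle layer have index `j+1`, and the root (`none`) has
index `n`. -/
def sIdx (n : ℕ) : Option (Option (Fin (n - 1) × Bool)) → ℕ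
  | none => n
  | some none => 0
  | some (some (j, _)) => (j : ℕ) + 1

/-- The frame `S_n` (for `n ≥ 2`): the Boolean sum whose layers from top to
bottom have sizes `1, 2, …, 2, 1` (with `n - 1` layers of size `2`). -/
def SFrame (n : ℕ) : Frame where
  W := Option (Option (Fin (n - 1) × Bool))
  le a b := a = b ∨ sIdx n b < sIdx n a
  refl _ := Or.inl rfl
  trans := by
    rintro a b c (rfl | h1) h2
    · exact h2
    · rcases h2 with rfl | h2
      · exact Or.inr h1
      · exact Or.inr (h2.trans h1)
  antisymm := by
    rintro a b (rfl | h1) h2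
    · rfl
    · rcases h2 with rfl | h2
      · rfl
      · omega

/-! In a finite Boolean sum, `x ≤ y` iff `x = y` or `y` has smaller depth than `x`.

If layers `j` and `j + 1` both have two points, collapse all layers of depth `< j` to one point
and all layers of depth `> j + 1` to another, and split each of the two wide layers into two
classes: this is a p-morphism onto `Q₅`, or onto `Q₄` when `j = 1` and nothing lies above.

Conversely `Q₄` and `Q₅` contain a butterfly `a₁, a₂ < b₁, b₂` with no point between the `aᵢ`
and the `bᵢ`; it survives in any poset having them as a rooted upset. Pulled back along a
p-morphism from a Boolean sum, preimages of incomparable points have equal depth, so the `aᵢ`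
and the `bᵢ` come from two wide layers, and the gap makes these layers adjacent. -/

namespace Frame

variable {F : Frame} {w x y z : F.W} {m n : ℕ}

-- `sSup` is junk (`0`) when chains above `w` are unbounded; see `depthEq_depth` for finite `F`.
noncomputable def depth (F : Frame) (w : F.W) : ℕ := sSup {n | F.hasChainUp w n}

theorem hasChainUp_of_le (h : F.hasChainUp w n) (hmn : m ≤ n) : F.hasChainUp w m := by
  obtain ⟨f, hf0, hf⟩ := h
  exact ⟨fun i => f (Fin.castLE hmn i), fun i hi => hf0 _ hi, fun i j hij => hf _ _ hij⟩

theorem hasChainUp_one (w : F.W) : F.hasChainUp w 1 :=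
  ⟨fun _ => w, fun _ _ => rfl, fun i j hij => by omega⟩

theorem lt_of_lt_of_le (hxy : F.lt x y) (hyz : F.le y z) : F.lt x z := by
  refine ⟨F.trans _ _ _ hxy.1 hyz, fun hxz => hxy.2 ?_⟩
  subst hxz
  exact F.antisymm _ _ hxy.1 hyz

theorem hasChainUp_cons (hxy : F.lt x y) (h : F.hasChainUp y n) : F.hasChainUp x (n + 1) := by
  obtain ⟨f, hf0, hf⟩ := h
  refine ⟨Fin.cons x f, fun i hi => by obtain rfl : i = 0 := Fin.ext hi; rfl, ?_⟩
  intro i j hij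
  induction j using Fin.cases with
  | zero => exact absurd hij (by simp)
  | succ j =>
    induction i using Fin.cases with
    | zero =>
      rw [Fin.cons_zero, Fin.cons_succ]
      refine lt_of_lt_of_le hxy ?_
      rcases Nat.eq_zero_or_pos j with hj | hj
      · rw [hf0 j hj]; exact F.refl y
      · rw [← hf0 ⟨0, by omega⟩ rfl]; exact (hf _ _ hj).1
    | succ i => simpa using hf i j (by simpa using hij)

theorem hasChainUp_le_card [Finite F.W] (h : F.hasChainUp w n) : n ≤ Nat.card F.W := by
  obtain ⟨f, -, hf⟩ := h
  have hinj : Function.Injective f := by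
    intro i j hij
    by_contra hne
    rcases Fin.lt_or_lt_of_ne hne with h | h
    · exact (hf i j h).2 hij
    · exact (hf j i h).2 hij.symm
  simpa using Nat.card_le_card_of_injective f hinj

theorem le_depth_of_hasChainUp [Finite F.W] (h : F.hasChainUp w n) : n ≤ F.depth w :=
  le_csSup ⟨Nat.card F.W, fun _ hm => hasChainUp_le_card hm⟩ h

theorem depthEq_depth [Finite F.W] (w : F.W) : F.depthEq w (F.depth w) :=
  ⟨Nat.sSup_mem ⟨1, hasChainUp_one w⟩ ⟨Nat.card F.W, fun _ hm => hasChainUp_le_card hm⟩,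
    fun h => by have := le_depth_of_hasChainUp h; omega⟩

theorem depthEq_iff [Finite F.W] : F.depthEq w n ↔ F.depth w = n := by
  refine ⟨fun ⟨h, hn⟩ => ?_, fun h => h ▸ depthEq_depth w⟩
  have := le_depth_of_hasChainUp h
  by_contra hne
  exact hn (hasChainUp_of_le (depthEq_depth w).1 (by omega))

theorem one_le_depth [Finite F.W] (w : F.W) : 1 ≤ F.depth w :=
  le_depth_of_hasChainUp (hasChainUp_one w)

theorem depth_lt_depth [Finite F.W] (h : F.lt x y) : F.depth y < F.depth x :=
  le_depth_of_hasChainUp (hasChainUp_cons h (depthEq_depth y).1)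

theorem exists_lt_depth_eq [Finite F.W] (h : F.depth x = n + 2) :
    ∃ y, F.lt x y ∧ F.depth y = n + 1 := by
  obtain ⟨f, hf0, hf⟩ : F.hasChainUp x (n + 2) := h ▸ (depthEq_depth x).1
  have hxy : F.lt x (f 1) := hf0 0 rfl ▸ hf 0 1 (by simp)
  have htail : F.hasChainUp (f 1) (n + 1) :=
    ⟨fun i => f i.succ, fun i hi => by obtain rfl : i = 0 := Fin.ext hi; rfl,
      fun i j hij => hf _ _ (by simpa using hij)⟩
  have := depth_lt_depth hxy
  have := le_depth_of_hasChainUp htail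
  exact ⟨f 1, hxy, by omega⟩

theorem exists_le_depth_eq [Finite F.W] (hm : 1 ≤ m) (hmx : m ≤ F.depth x) :
    ∃ y, F.le x y ∧ F.depth y = m := by
  obtain ⟨n, hn⟩ : ∃ n, F.depth x = m + n := ⟨_, (Nat.add_sub_cancel' hmx).symm⟩
  induction n generalizing x with
  | zero => exact ⟨x, F.refl x, hn⟩
  | succ n ih =>
    obtain ⟨y, hxy, hy⟩ := exists_lt_depth_eq (n := m + n - 1) (x := x) (by omega)
    obtain ⟨z, hyz, hz⟩ := ih (x := y) (by omega) (by omega)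
    exact ⟨z, F.trans _ _ _ hxy.1 hyz, hz⟩

theorem eq_of_le_of_depth_le [Finite F.W] (hxy : F.le x y) (hd : F.depth x ≤ F.depth y) :
    x = y := by
  by_contra hne
  have := depth_lt_depth ⟨hxy, hne⟩
  omega

def layer (F : Frame) (j : ℕ) : Set F.W := {w | F.depth w = j}

@[simp]
theorem mem_layer {j : ℕ} : w ∈ F.layer j ↔ F.depth w = j := Iff.rfl

theorem hasStack_two_iff [Finite F.W] :
    HasStack F 2 ↔ ∃ j, (F.layer j).Nontrivial ∧ (F.layer (j + 1)).Nontrivial := by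
  have hlayer : ∀ i, (F.layer i).Nontrivial ↔ ∃ a b, a ≠ b ∧ F.depthEq a i ∧ F.depthEq b i := by
    intro i
    simp only [Set.Nontrivial, mem_layer, depthEq_iff]
    constructor
    · rintro ⟨a, ha, b, hb, hab⟩; exact ⟨a, b, hab, ha, hb⟩
    · rintro ⟨a, b, hab, ha, hb⟩; exact ⟨a, ha, b, hb, hab⟩
  simp only [HasStack, hlayer]
  constructor
  · rintro ⟨j, hj⟩
    exact ⟨j, hj j le_rfl (by omega), hj (j + 1) (by omega) (by omega)⟩
  · rintro ⟨j, hj, hj₁⟩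
    refine ⟨j, fun i hji hij => ?_⟩
    obtain rfl | rfl : i = j ∨ i = j + 1 := by omega
    exacts [hj, hj₁]

def HasButterfly (F : Frame) : Prop :=
  ∃ a₁ a₂ b₁ b₂ : F.W, ¬ F.le a₁ a₂ ∧ ¬ F.le a₂ a₁ ∧ ¬ F.le b₁ b₂ ∧ ¬ F.le b₂ b₁ ∧
    F.le a₁ b₁ ∧ F.le a₁ b₂ ∧ F.le a₂ b₁ ∧ F.le a₂ b₂ ∧
    ∀ w, F.le a₁ w → F.le a₂ w → F.le w b₁ → F.le w b₂ → False

theorem HasButterfly.of_frameIso {P Q : Frame} (hQ : Q.HasButterfly) (h : FrameIso P Q) :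
    P.HasButterfly := by
  obtain ⟨f, hbij, hf⟩ := h
  obtain ⟨a₁, a₂, b₁, b₂, h₁, h₂, h₃, h₄, h₅, h₆, h₇, h₈, hgap⟩ := hQ
  let e := Equiv.ofBijective f hbij
  have he : ∀ u, f (e.symm u) = u := e.apply_symm_apply
  refine ⟨e.symm a₁, e.symm a₂, e.symm b₁, e.symm b₂, ?_⟩
  simp only [hf, he]
  exact ⟨h₁, h₂, h₃, h₄, h₅, h₆, h₇, h₈, fun w => hgap (f w)⟩

theorem HasButterfly.of_up {G : Frame} {z : G.W} (h : (G.up z).HasButterfly) :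
    G.HasButterfly := by
  obtain ⟨a₁, a₂, b₁, b₂, h₁, h₂, h₃, h₄, h₅, h₆, h₇, h₈, hgap⟩ := h
  exact ⟨a₁.1, a₂.1, b₁.1, b₂.1, h₁, h₂, h₃, h₄, h₅, h₆, h₇, h₈,
    fun w hw => hgap ⟨w, G.trans _ _ _ a₁.2 hw⟩ hw⟩

end Frame

namespace IsBooleanSum

open Frame

variable {F : Frame} [Finite F.W] {x y : F.W}

theorem le_of_depth_lt (hF : IsBooleanSum F) (h : F.depth y < F.depth x) : F.le x y := by
  obtain ⟨n, hn⟩ : ∃ n, F.depth x = F.depth y + 1 + n := ⟨_, (Nat.add_sub_cancel' h).symm⟩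
  induction n generalizing x with
  | zero => exact hF.2.2 x y _ (depthEq_iff.2 hn) (depthEq_depth y)
  | succ n ih =>
    obtain ⟨z, hxz, hz⟩ := exists_lt_depth_eq (n := F.depth y + n) (x := x) (by omega)
    exact F.trans _ _ _ hxz.1 (ih (by omega) (by omega))

theorem le_iff (hF : IsBooleanSum F) : F.le x y ↔ x = y ∨ F.depth y < F.depth x := by
  refine ⟨fun h => (em (x = y)).imp id fun hne => depth_lt_depth ⟨h, hne⟩, ?_⟩
  rintro (rfl | h)
  exacts [F.refl x, hF.le_of_depth_lt h]

theorem depth_eq_of_not_le (hF : IsBooleanSum F) (hxy : ¬ F.le x y) (hyx : ¬ F.le y x) :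
    F.depth x = F.depth y := by
  by_contra hne
  rcases Nat.lt_or_gt_of_ne hne with h | h
  exacts [hyx (hF.le_of_depth_lt h), hxy (hF.le_of_depth_lt h)]

theorem hasStack_two_of_hasButterfly (hF : IsBooleanSum F) {G : Frame}
    (hG : PMorphicImage F G) (hB : G.HasButterfly) : HasStack F 2 := by
  obtain ⟨f, ⟨hmono, hback⟩, hsurj⟩ := hG
  obtain ⟨A₁, A₂, B₁, B₂, hA₁₂, hA₂₁, hB₁₂, hB₂₁, hA₁B₁, -, hA₂B₁, -, hgap⟩ := hB
  obtain ⟨x₁, rfl⟩ := hsurj A₁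
  obtain ⟨x₂, rfl⟩ := hsurj A₂
  obtain ⟨x₃, hx₁₃, rfl⟩ := hback x₁ B₁ hA₁B₁
  obtain ⟨x₄, rfl⟩ := hsurj B₂
  have hd₁₂ := hF.depth_eq_of_not_le (mt (hmono _ _) hA₁₂) (mt (hmono _ _) hA₂₁)
  have hd₃₄ := hF.depth_eq_of_not_le (mt (hmono _ _) hB₁₂) (mt (hmono _ _) hB₂₁)
  have hd₃₁ : F.depth x₃ < F.depth x₁ :=
    depth_lt_depth ⟨hx₁₃, by rintro rfl; exact hA₂₁ hA₂B₁⟩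
  -- a point one layer below `x₃` would be sent strictly between the `A`s and the `B`s
  have hstep : F.depth x₁ = F.depth x₃ + 1 := by
    by_contra hne
    obtain ⟨y, -, hy⟩ := exists_le_depth_eq (x := x₁) (m := F.depth x₃ + 1) (by omega) hd₃₁
    exact hgap (f y) (hmono _ _ (hF.le_of_depth_lt (by omega)))
      (hmono _ _ (hF.le_of_depth_lt (by omega))) (hmono _ _ (hF.le_of_depth_lt (by omega)))
      (hmono _ _ (hF.le_of_depth_lt (by omega)))
  refine hasStack_two_iff.2 ⟨F.depth x₃, ⟨x₃, rfl, x₄, hd₃₄.symm, ?_⟩, ⟨x₁, hstep, x₂, ?_, ?_⟩⟩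
  · rintro rfl; exact hB₁₂ (G.refl _)
  · exact hd₁₂.symm.trans hstep
  · rintro rfl; exact hA₁₂ (G.refl _)

-- `hQ` says that `Q` is an ordinal sum of antichains, ranked by `rk`.
theorem pMorphicImage_of_rank (hF : IsBooleanSum F) {Q : Frame} (rk : Q.W → ℕ)
    (hQ : ∀ u v, Q.le u v ↔ u = v ∨ rk v < rk u) {f : F.W → Q.W}
    (hf : Function.Surjective f) {g : ℕ → ℕ} (hg : Monotone g)
    (hrk : ∀ x, rk (f x) = g (F.depth x))
    (hcollapse : ∀ x y, F.depth y < F.depth x → g (F.depth y) = g (F.depth x) → f x = f y) :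
    PMorphicImage F Q := by
  refine ⟨f, ⟨fun x y hxy => ?_, fun x v hv => ?_⟩, hf⟩
  · rcases hF.le_iff.1 hxy with rfl | hlt
    · exact Q.refl _
    rcases (hg hlt.le).lt_or_eq with h | h
    · exact (hQ _ _).2 (Or.inr (by rwa [hrk, hrk]))
    · rw [hcollapse x y hlt h]; exact Q.refl _
  · rcases (hQ _ _).1 hv with rfl | hlt
    · exact ⟨x, F.refl x, rfl⟩
    obtain ⟨y, rfl⟩ := hf v
    rw [hrk, hrk] at hlt
    exact ⟨y, hF.le_of_depth_lt (hg.reflect_lt hlt), rfl⟩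

end IsBooleanSum

def q4rank : Fin 5 → ℕ := ![3, 2, 2, 1, 1]

def q5rank : Fin 6 → ℕ := ![3, 2, 2, 1, 1, 0]

theorem Q4f_le_iff (u v : Fin 5) : Q4f.le u v ↔ u = v ∨ q4rank v < q4rank u := by
  revert u v; unfold Q4f; decide

theorem Q5f_le_iff (u v : Fin 6) : Q5f.le u v ↔ u = v ∨ q5rank v < q5rank u := by
  revert u v; unfold Q5f; decide

theorem Q4f_hasButterfly : Q4f.HasButterfly :=
  ⟨(1 : Fin 5), (2 : Fin 5), (3 : Fin 5), (4 : Fin 5), by unfold Q4f; decide⟩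

theorem Q5f_hasButterfly : Q5f.HasButterfly :=
  ⟨(1 : Fin 6), (2 : Fin 6), (3 : Fin 6), (4 : Fin 6), by unfold Q5f; decide⟩

namespace Frame

variable (F : Frame)

open Classical in
noncomputable def toQ4 (a b x : F.W) : Fin 5 :=
  if F.depth x = 1 then (if x = a then 3 else 4)
  else if F.depth x = 2 then (if x = b then 1 else 2) else 0

open Classical in
noncomputable def toQ5 (j : ℕ) (a b x : F.W) : Fin 6 :=
  if F.depth x < j then 5
  else if F.depth x = j then (if x = a then 3 else 4)
  else if F.depth x = j + 1 then (if x = b then 1 else 2) else 0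

end Frame

namespace IsBooleanSum

open Frame

variable {F : Frame} [Finite F.W] {r a a' b b' c : F.W}

theorem pMorphicImage_Q4f (hF : IsBooleanSum F) (hr : 3 ≤ F.depth r)
    (ha : F.depth a = 1) (ha' : F.depth a' = 1) (haa' : a ≠ a')
    (hb : F.depth b = 2) (hb' : F.depth b' = 2) (hbb' : b ≠ b') : PMorphicImage F Q4f := by
  refine hF.pMorphicImage_of_rank q4rank Q4f_le_iff (f := F.toQ4 a b) (g := fun n => min n 3)
    (fun v : Fin 5 => ?_) (fun m n h => min_le_min_right 3 h) (fun x => ?_) (fun x y hxy h => ?_)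
  · fin_cases v
    · exact ⟨r, by rw [toQ4, if_neg (by omega), if_neg (by omega)]; rfl⟩
    · exact ⟨b, by rw [toQ4, if_neg (by omega), if_pos hb, if_pos rfl]; rfl⟩
    · exact ⟨b', by rw [toQ4, if_neg (by omega), if_pos hb', if_neg hbb'.symm]; rfl⟩
    · exact ⟨a, by rw [toQ4, if_pos ha, if_pos rfl]; rfl⟩
    · exact ⟨a', by rw [toQ4, if_pos ha', if_neg haa'.symm]; rfl⟩
  · have := one_le_depth x
    unfold toQ4; split_ifs <;> simp [q4rank] <;> omega
  · unfold toQ4; split_ifs <;> first | rfl | omega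

theorem pMorphicImage_Q5f (hF : IsBooleanSum F) {j : ℕ} (hr : j + 2 ≤ F.depth r)
    (ha : F.depth a = j) (ha' : F.depth a' = j) (haa' : a ≠ a')
    (hb : F.depth b = j + 1) (hb' : F.depth b' = j + 1) (hbb' : b ≠ b')
    (hc : F.depth c < j) : PMorphicImage F Q5f := by
  refine hF.pMorphicImage_of_rank q5rank Q5f_le_iff (f := F.toQ5 j a b)
    (g := fun n => min (n + 1 - j) 3) (fun v : Fin 6 => ?_) (fun m n h => by dsimp only; omega)
    (fun x => ?_) (fun x y hxy h => ?_)
  · fin_cases v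
    · exact ⟨r, by rw [toQ5, if_neg (by omega), if_neg (by omega), if_neg (by omega)]; rfl⟩
    · exact ⟨b, by rw [toQ5, if_neg (by omega), if_neg (by omega), if_pos hb, if_pos rfl]; rfl⟩
    · exact ⟨b', by
        rw [toQ5, if_neg (by omega), if_neg (by omega), if_pos hb', if_neg hbb'.symm]; rfl⟩
    · exact ⟨a, by rw [toQ5, if_neg (by omega), if_pos ha, if_pos rfl]; rfl⟩
    · exact ⟨a', by rw [toQ5, if_neg (by omega), if_pos ha', if_neg haa'.symm]; rfl⟩
    · exact ⟨c, by rw [toQ5, if_pos hc]; rfl⟩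
  · unfold toQ5; split_ifs <;> simp [q5rank] <;> omega
  · unfold toQ5; split_ifs <;> first | rfl | omega

theorem pMorphicImage_Q4f_or_Q5f (hF : IsBooleanSum F) (h : HasStack F 2) :
    PMorphicImage F Q4f ∨ PMorphicImage F Q5f := by
  obtain ⟨j, ⟨a, ha, a', ha', haa'⟩, ⟨b, hb, b', hb', hbb'⟩⟩ := hasStack_two_iff.1 h
  simp only [mem_layer] at ha ha' hb hb'
  obtain ⟨r, hr⟩ := hF.1
  have hrj : j + 2 ≤ F.depth r := by
    by_contra hlt
    have hrb := eq_of_le_of_depth_le (hr b) (by omega)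
    have hrb' := eq_of_le_of_depth_le (hr b') (by omega)
    exact hbb' (hrb.symm.trans hrb')
  obtain rfl | hj : 1 = j ∨ 1 < j := (ha ▸ one_le_depth a).eq_or_lt
  · exact .inl (hF.pMorphicImage_Q4f hrj ha ha' haa' hb hb' hbb')
  · obtain ⟨c, -, hc⟩ := exists_le_depth_eq (x := a) (m := j - 1) (by omega) (by rw [ha]; omega)
    exact .inr (hF.pMorphicImage_Q5f hrj ha ha' haa' hb hb' hbb' (c := c) (by omega))

end IsBooleanSum

theorem exists_frameIso_up_of_pMorphicImage {P Q : Frame} (h : PMorphicImage P Q) {z : Q.W}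
    (hz : ∀ w, Q.le z w) : ∃ G : Frame, PMorphicImage P G ∧ ∃ z : G.W, FrameIso (G.up z) Q :=
  ⟨Q, h, z, Subtype.val, ⟨Subtype.val_injective, fun w => ⟨⟨w, hz w⟩, rfl⟩⟩, fun _ _ => Iff.rfl⟩

/-- Let `P` be a finite rooted poset which is a frame for
`wPL`, i.e. a Boolean sum. Then `P` validates the Yankov formulas `𝒥(Q₄)`
and `𝒥(Q₅)` iff `P` contains no `2`-stack (its stack-depth is at most `1`). -/
theorem statement7 (P : Frame) (hfin : Finite P.W) (hBS : IsBooleanSum P)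
    (J4 J5 : Form) (h4 : IsYankov J4 Q4f) (h5 : IsYankov J5 Q5f) :
    (P.Valid J4 ∧ P.Valid J5) ↔ ¬ HasStack P 2 := by
  constructor
  · rintro ⟨hv4, hv5⟩ hst
    rcases hBS.pMorphicImage_Q4f_or_Q5f hst with h | h
    · exact (h4 P hfin).2 (exists_frameIso_up_of_pMorphicImage h (z := (0 : Fin 5))
        (by unfold Q4f; decide)) hv4
    · exact (h5 P hfin).2 (exists_frameIso_up_of_pMorphicImage h (z := (0 : Fin 6))
        (by unfold Q5f; decide)) hv5
  · intro hns
    have hvalid : ∀ {J Q}, IsYankov J Q → Q.HasButterfly → P.Valid J := fun hJ hQ => by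
      by_contra hJP
      obtain ⟨G, hG, z, hiso⟩ := (hJ P hfin).1 hJP
      exact hns (hBS.hasStack_two_of_hasButterfly hG (hQ.of_frameIso hiso).of_up)
    exact ⟨hvalid h4 Q4f_hasButterfly, hvalid h5 Q5f_hasButterfly⟩
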